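/- Define, for each natural number j, the polynomial P_j(x) = (1/2^j) Σ_{k=0}^{j} (binom(j,k))^2 (x−1)^{j−k} (x+1)^k. Then for every n ≥ 1, the polynomial P_n has exactly n distinct real roots, and all of them lie in the open interval (−1, 1). -/

import Mathlib

/-- The `j`-th Legendre polynomial
`P_j(x) = (1/2^j) ∑_{k=0}^{j} (binom(j,k))^2 (x-1)^{j-k} (x+1)^k`. -/
noncomputable def legP (j : ℕ) : Polynomial ℝ :=
  ((1 : ℝ) / 2 ^ j) • ∑ k ∈ Finset.range (j + 1),
    ((Nat.choose j k : ℝ) ^ 2) • ((Polynomial.X - 1) ^ (j - k) * (Polynomial.X + 1) ^ k)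

/-!
Up to the factor `n! 2ⁿ`, `P_n` is the `n`-th derivative of `(x + 1)ⁿ (x - 1)ⁿ` (Rodrigues'
formula, by Leibniz's rule). For `k < n` the `k`-th derivative of this polynomial still vanishes
at `±1`, so if it has `k` zeros in `(-1, 1)`, Rolle's theorem between consecutive ones of these
`k + 2` zeros in `[-1, 1]` yields `k + 1` zeros of the next derivative in `(-1, 1)`. Hence `P_n`
has `n` distinct zeros in `(-1, 1)`; as `deg P_n ≤ n` and `P_n(1) = 1`, there are no others.
-/

open Polynomial Finset
open scoped Nat

namespace Polynomial

theorem exists_finset_isRoot_derivative {p : ℝ[X]} {a b : ℝ} {m : ℕ} {S : Finset ℝ}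
    (hS : ↑S ⊆ Set.Icc a b) (hcard : #S = m + 1) (hroot : ∀ x ∈ S, p.IsRoot x) :
    ∃ T : Finset ℝ, #T = m ∧ ↑T ⊆ Set.Ioo a b ∧ ∀ x ∈ T, p.derivative.IsRoot x := by
  induction m generalizing S b with
  | zero => exact ⟨∅, rfl, by simp, by simp⟩
  | succ m ih =>
    -- Rolle between the two largest points `M' < M` of `S` adds a zero beyond those for `S \ {M}`.
    have hne : S.Nonempty := card_pos.mp (by omega)
    set M := S.max' hne
    have hM : M ∈ S := S.max'_mem hne
    have hne' : (S.erase M).Nonempty := card_pos.mp (by rw [card_erase_of_mem hM]; omega)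
    set M' := (S.erase M).max' hne'
    have hM' : M' ∈ S.erase M := (S.erase M).max'_mem hne'
    have hM'M : M' < M :=
      (S.le_max' M' (mem_of_mem_erase hM')).lt_of_ne (ne_of_mem_erase hM')
    obtain ⟨T, hTcard, hTab, hTroot⟩ := ih (S := S.erase M) (b := M')
      (fun x hx => ⟨(hS (mem_of_mem_erase hx)).1, (S.erase M).le_max' x hx⟩)
      (by rw [card_erase_of_mem hM, hcard]; rfl)
      (fun x hx => hroot x (mem_of_mem_erase hx))
    obtain ⟨c, hc, hc'⟩ := exists_deriv_eq_zero hM'M p.continuousOn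
      (by rw [(hroot M' (mem_of_mem_erase hM')).eq_zero, (hroot M hM).eq_zero])
    have hcT : c ∉ T := fun h => (hTab h).2.not_gt hc.1
    refine ⟨insert c T, by rw [card_insert_of_notMem hcT, hTcard], ?_, ?_⟩
    · rw [coe_insert, Set.insert_subset_iff]
      exact ⟨⟨(hS (mem_of_mem_erase hM')).1.trans_lt hc.1, hc.2.trans_le (hS hM).2⟩,
        hTab.trans (Set.Ioo_subset_Ioo_right (hM'M.le.trans (hS hM).2))⟩
    · rintro x hx
      rcases mem_insert.mp hx with rfl | hx
      · rwa [Polynomial.deriv] at hc'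
      · exact hTroot x hx

theorem isRoot_iterate_derivative_of_pow_dvd {R : Type*} [CommRing R] {p : R[X]} {a : R} {n k : ℕ}
    (ha : (X - C a) ^ n ∣ p) (hk : k < n) : (derivative^[k] p).IsRoot a :=
  dvd_iff_isRoot.mp <| (dvd_pow_self _ (Nat.sub_ne_zero_of_lt hk)).trans
    (pow_sub_dvd_iterate_derivative_of_pow_dvd k ha)

theorem exists_finset_isRoot_iterate_derivative {p : ℝ[X]} {a b : ℝ} {n k : ℕ} (hab : a < b)
    (ha : (X - C a) ^ n ∣ p) (hb : (X - C b) ^ n ∣ p) (hk : k ≤ n) :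
    ∃ S : Finset ℝ, #S = k ∧ ↑S ⊆ Set.Ioo a b ∧ ∀ x ∈ S, (derivative^[k] p).IsRoot x := by
  induction k with
  | zero => exact ⟨∅, rfl, by simp, by simp⟩
  | succ k ih =>
    obtain ⟨S, hcard, hSab, hroot⟩ := ih (by omega)
    have haS : a ∉ insert b S := by
      simpa [hab.ne] using fun h => (hSab h).1.ne rfl
    have hbS : b ∉ S := fun h => (hSab h).2.ne rfl
    obtain ⟨T, hTcard, hTab, hTroot⟩ := exists_finset_isRoot_derivative
      (S := insert a (insert b S)) (m := k + 1) (p := derivative^[k] p)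
      (by
        simp only [coe_insert, Set.insert_subset_iff]
        exact ⟨Set.left_mem_Icc.mpr hab.le, Set.right_mem_Icc.mpr hab.le,
          hSab.trans Set.Ioo_subset_Icc_self⟩)
      (by rw [card_insert_of_notMem haS, card_insert_of_notMem hbS, hcard])
      (by
        simp only [mem_insert, forall_eq_or_imp]
        exact ⟨isRoot_iterate_derivative_of_pow_dvd ha (by omega),
          isRoot_iterate_derivative_of_pow_dvd hb (by omega), hroot⟩)
    exact ⟨T, hTcard, hTab, by rwa [Function.iterate_succ_apply']⟩

theorem mem_of_isRoot_of_natDegree_le_card {R : Type*} [CommRing R] [IsDomain R]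
    {p : R[X]} {S : Finset R} (hp : p ≠ 0) (hS : ∀ x ∈ S, p.IsRoot x)
    (hdeg : p.natDegree ≤ #S) {x : R} (hx : p.IsRoot x) : x ∈ S := by
  classical
  have hsub : S ⊆ p.roots.toFinset := fun y hy =>
    Multiset.mem_toFinset.mpr ((mem_roots hp).mpr (hS y hy))
  have hcard : #p.roots.toFinset ≤ #S :=
    (Multiset.toFinset_card_le _).trans ((card_roots' p).trans hdeg)
  rw [eq_of_subset_of_card_le hsub hcard]
  exact Multiset.mem_toFinset.mpr ((mem_roots hp).mpr hx)

end Polynomial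

theorem Nat.choose_mul_descFactorial_sub_mul_descFactorial {n k : ℕ} (hk : k ≤ n) :
    n.choose k * n.descFactorial (n - k) * n.descFactorial k = n ! * n.choose k ^ 2 := by
  rw [descFactorial_eq_factorial_mul_choose, descFactorial_eq_factorial_mul_choose,
    choose_symm hk, ← choose_mul_factorial_mul_factorial hk]
  ring

theorem legP_rodrigues (n : ℕ) :
    ((n ! * 2 ^ n : ℕ) : ℝ) • legP n = derivative^[n] ((X - C (-1)) ^ n * (X - C 1) ^ n) := by
  have hscalar : ((n ! * 2 ^ n : ℕ) : ℝ) * (1 / 2 ^ n) = n ! := by push_cast; field_simp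
  rw [iterate_derivative_mul, legP, smul_smul, hscalar, smul_sum]
  refine sum_congr rfl fun k hk => ?_
  have hkn : k ≤ n := Nat.lt_succ_iff.mp (mem_range.mp hk)
  have key := congrArg (Nat.cast : ℕ → ℝ[X])
    (Nat.choose_mul_descFactorial_sub_mul_descFactorial hkn)
  rw [iterate_derivative_X_sub_pow, iterate_derivative_X_sub_pow, Nat.sub_sub_self hkn]
  simp only [nsmul_eq_mul]
  simp only [map_neg, map_one, sub_neg_eq_add, Algebra.smul_def, map_natCast, map_pow]
  push_cast at key ⊢
  linear_combination ((X - 1) ^ (n - k) * (X + 1) ^ k) * key.symm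

theorem isRoot_legP_iff (n : ℕ) (x : ℝ) :
    (legP n).IsRoot x ↔ (derivative^[n] ((X - C (-1)) ^ n * (X - C 1) ^ n)).IsRoot x := by
  rw [← legP_rodrigues, IsRoot.def, IsRoot.def, eval_smul, smul_eq_mul,
    mul_eq_zero_iff_left (by positivity)]

theorem natDegree_legP_le (n : ℕ) : (legP n).natDegree ≤ n := by
  rw [← natDegree_smul (legP n) (by positivity : ((n ! * 2 ^ n : ℕ) : ℝ) ≠ 0), legP_rodrigues]
  refine (natDegree_iterate_derivative _ n).trans ?_
  rw [natDegree_mul (pow_ne_zero _ (X_sub_C_ne_zero _)) (pow_ne_zero _ (X_sub_C_ne_zero _)),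
    natDegree_pow, natDegree_pow, natDegree_X_sub_C, natDegree_X_sub_C]
  omega

theorem eval_one_legP (n : ℕ) : (legP n).eval 1 = 1 := by
  rw [legP, eval_smul, eval_finsetSum, sum_eq_single_of_mem n (self_mem_range_succ n)]
  · norm_num
  · intro k hk hkn
    have : n - k ≠ 0 := by have := mem_range.mp hk; omega
    simp [zero_pow this]

theorem legP_ne_zero (n : ℕ) : legP n ≠ 0 := fun h => by
  simpa [h] using eval_one_legP n

theorem legendre_roots_general (n : ℕ) :
    ∃ S : Finset ℝ, S.card = n ∧
      (∀ x ∈ S, (legP n).eval x = 0 ∧ x ∈ Set.Ioo (-1 : ℝ) 1) ∧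
      (∀ x : ℝ, (legP n).eval x = 0 → x ∈ S) := by
  obtain ⟨S, hcard, hSI, hroot⟩ := exists_finset_isRoot_iterate_derivative (by norm_num)
    (dvd_mul_right ((X - C (-1 : ℝ)) ^ n) ((X - C 1) ^ n)) (dvd_mul_left _ _) le_rfl
  have hSroot : ∀ x ∈ S, (legP n).IsRoot x := fun x hx => (isRoot_legP_iff n x).mpr (hroot x hx)
  exact ⟨S, hcard, fun x hx => ⟨hSroot x hx, hSI hx⟩, fun x hx =>
    mem_of_isRoot_of_natDegree_le_card (legP_ne_zero n) hSroot (hcard ▸ natDegree_legP_le n) hx⟩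

/-- For `n ≥ 1`, `P_n` has exactly `n` distinct real roots, all lying in `(-1, 1)`. -/
theorem legendre_roots (n : ℕ) (hn : 1 ≤ n) :
    ∃ S : Finset ℝ, S.card = n ∧
      (∀ x ∈ S, (legP n).eval x = 0 ∧ x ∈ Set.Ioo (-1 : ℝ) 1) ∧
      (∀ x : ℝ, (legP n).eval x = 0 → x ∈ S) :=
  legendre_roots_general n
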